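/- Under the setup described in the context, for all x, y ∈ S' such that x, y, e are pairwise distinct, f_x(y)·g_y(x) = −f_y(x)·g_x(y). -/

import Mathlib

open Projectivization

abbrev Pt (F : Type) [Field F] : Type := Projectivization F (Fin 3 → F)

def IsLine (F : Type) [Field F] (W : Submodule F (Fin 3 → F)) : Prop :=
  Module.finrank F W = 2

noncomputable def secantCount (F : Type) [Field F] (S : Set (Pt F))
    (W : Submodule F (Fin 3 → F)) : ℕ :=
  {p ∈ S | p.submodule ≤ W}.ncard

noncomputable def oddSecants (F : Type) [Field F] (S : Set (Pt F)) : ℕ :=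
  {W : Submodule F (Fin 3 → F) | IsLine F W ∧ Odd (secantCount F S W)}.ncard

noncomputable def linesThroughWithCount (F : Type) [Field F] (S : Set (Pt F))
    (x : Pt F) (i : ℕ) : ℕ :=
  {W : Submodule F (Fin 3 → F) | IsLine F W ∧ x.submodule ≤ W ∧ secantCount F S W = i}.ncard

noncomputable def S43 (F : Type) [Field F] [Fintype F] (S : Set (Pt F)) : Set (Pt F) :=
  {x ∈ S | linesThroughWithCount F S x 1 = 1 ∧ linesThroughWithCount F S x 3 = 1 ∧
    linesThroughWithCount F S x 2 = Fintype.card F - 1}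


/-!
Fix `x ∈ S'` and take coordinates `c₀, c₁, c₂` in the frame `(x, y, e)`. The lines through `x`
other than `xe` are the lines `c₂ = t c₁`, and since `xy` and `xe` are bisecants every other point
`p` of `S` lies on one of them with slope `t = c₂(p)/c₁(p) ≠ 0`. Through `x` pass one tangent, one
3-secant and otherwise bisecants, so a line of parameter `t` carries `0`, `2` or `1` such points,
and by Wilson's theorem the product of all slopes is `∏_{t ≠ 0} t · τ_g / τ_f = -τ_g / τ_f`, where
`τ_f, τ_g` are the parameters of the tangent and the 3-secant, read off from `f_x` and `g_x`.
The same at `y` in the frame `(y, x, e)` and at `e` in the frame `(e, y, x)` computes the products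
of `c₂/c₀` and of `c₀/c₁`; the relation `c₂/c₁ = (c₂/c₀)(c₀/c₁)` together with the normalisation
at `e` is the claim.
-/

open Module Finset

section LinearAlgebra

variable {K V : Type*} [Field K] [AddCommGroup V] [Module K V]

theorem Projectivization.rep_mem_submodule (p : Projectivization K V) : p.rep ∈ p.submodule := by
  rw [p.submodule_eq]
  exact Submodule.mem_span_singleton_self _

theorem Projectivization.submodule_le_iff_rep_mem (p : Projectivization K V) (W : Submodule K V) :
    p.submodule ≤ W ↔ p.rep ∈ W := by
  rw [p.submodule_eq, Submodule.span_singleton_le_iff_mem]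

theorem Projectivization.submodule_sup_eq_span_pair (p q : Projectivization K V) :
    p.submodule ⊔ q.submodule = Submodule.span K {p.rep, q.rep} := by
  rw [p.submodule_eq, q.submodule_eq, Submodule.span_insert]

theorem Module.Basis.coord_ne_zero_of_notMem {ι : Type*} (b : Basis ι K V) {i : ι}
    {W : Submodule K V} (hW : ∀ j ≠ i, b j ∈ W) {v : V} (hv : v ∉ W) : b.coord i v ≠ 0 := by
  intro h
  have hspan : v ∈ Submodule.span K (b '' {i}ᶜ) := by
    rw [b.mem_span_image]
    rintro j hj rfl
    exact Finsupp.mem_support_iff.mp hj h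
  refine hv (Submodule.span_le.mpr ?_ hspan)
  rintro _ ⟨j, hj, rfl⟩
  exact hW j hj

theorem Projectivization.ne_of_basis_apply_eq_rep {ι : Type*} {b : Basis ι K V} {i j : ι}
    (hij : i ≠ j) {u v : Projectivization K V} (hu : b i = u.rep) (hv : b j = v.rep) : u ≠ v := by
  rintro rfl
  exact b.injective.ne hij (hu.trans hv.symm)

variable {ι : Type*} [DecidableEq ι] (b : Basis ι K V)

theorem Module.Basis.coord_reindex_swap_left (i j : ι) :
    (b.reindex (Equiv.swap i j)).coord i = b.coord j := by
  ext v
  simp [Basis.coord_apply]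

theorem Module.Basis.coord_reindex_swap_of_ne {i j k : ι} (hi : k ≠ i) (hj : k ≠ j) :
    (b.reindex (Equiv.swap i j)).coord k = b.coord k := by
  ext v
  simp [Basis.coord_apply, Equiv.swap_apply_of_ne_of_ne hi hj]

end LinearAlgebra

section Lines

variable {F : Type} [Field F]

theorem isLine_ker {φ : (Fin 3 → F) →ₗ[F] F} (h : φ ≠ 0) : IsLine F (LinearMap.ker φ) := by
  have := Module.Dual.finrank_ker_add_one_of_ne_zero h
  rw [finrank_fin_fun] at this
  unfold IsLine
  omega

theorem IsLine.eq_of_le {W₁ W₂ : Submodule F (Fin 3 → F)} (h₁ : IsLine F W₁)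
    (h₂ : IsLine F W₂) (hle : W₁ ≤ W₂) : W₁ = W₂ :=
  Submodule.eq_of_le_of_finrank_eq hle (h₁.trans h₂.symm)

theorem IsLine.exists_ker_eq {W : Submodule F (Fin 3 → F)} (hW : IsLine F W) :
    ∃ φ : (Fin 3 → F) →ₗ[F] F, φ ≠ 0 ∧ LinearMap.ker φ = W := by
  have hlt : W < ⊤ := by
    refine lt_top_iff_ne_top.mpr fun h => ?_
    have := hW
    rw [IsLine, h, finrank_top, finrank_fin_fun] at this
    omega
  obtain ⟨φ, hφ, hWφ⟩ := W.exists_dual_map_eq_bot_of_lt_top hlt inferInstance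
  refine ⟨φ, hφ, (hW.eq_of_le (isLine_ker hφ) ?_).symm⟩
  rwa [LinearMap.le_ker_iff_map]

theorem isLine_sup {p q : Pt F} (h : p ≠ q) : IsLine F (p.submodule ⊔ q.submodule) := by
  have hind := Projectivization.linearIndependent_pair_iff_ne.mpr h
  have := finrank_span_eq_card hind
  rw [Matrix.range_cons, Matrix.range_cons_empty, Set.singleton_union] at this
  rw [IsLine, Projectivization.submodule_sup_eq_span_pair, this, Fintype.card_fin]

end Lines

section FiniteField

theorem Finset.prod_eq_prod_pow_card_filter {ι M : Type*} [CommMonoid M] [DecidableEq M]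
    {s : Finset ι} {t : Finset M} {g : ι → M} (h : ∀ i ∈ s, g i ∈ t) :
    ∏ i ∈ s, g i = ∏ m ∈ t, m ^ #{i ∈ s | g i = m} :=
  (prod_fiberwise_of_maps_to' h id).symm.trans (prod_congr rfl fun m _ => prod_const m)

theorem Finset.prod_div_eq_prod_div_mul_prod_div {ι K : Type*} [Field K] {s : Finset ι}
    {a b c : ι → K} (hb : ∀ i ∈ s, b i ≠ 0) :
    ∏ i ∈ s, a i / c i = (∏ i ∈ s, a i / b i) * ∏ i ∈ s, b i / c i := by
  rw [← prod_mul_distrib]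
  exact prod_congr rfl fun i hi => (div_mul_div_cancel₀ (hb i hi)).symm

variable {F : Type} [Field F] [Fintype F] [DecidableEq F]

theorem FiniteField.prod_erase_zero_eq_neg_one : ∏ t ∈ univ.erase (0 : F), t = -1 := by
  have hunits : ∏ u : Fˣ, (u : F) = -1 := by
    rw [← Units.coe_prod, FiniteField.prod_univ_units_id_eq_neg_one, Units.val_neg, Units.val_one]
  rw [← hunits]
  refine prod_bij' (fun t ht => Units.mk0 t (mem_erase.mp ht).1) (fun u _ => (u : F))
    (fun _ _ => mem_univ _) (fun u _ => mem_erase.mpr ⟨u.ne_zero, mem_univ _⟩)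
    (fun _ _ => rfl) (fun _ _ => Units.mk0_val _ _) (fun _ _ => rfl)

theorem FiniteField.prod_erase_zero_pow_eq_neg_div {n : F → ℕ} {a c : F} (ha : a ≠ 0)
    (hc : c ≠ 0) (hac : a ≠ c) (hna : n a = 0) (hnc : n c = 2)
    (hn : ∀ t ≠ 0, t ≠ a → t ≠ c → n t = 1) :
    ∏ t ∈ univ.erase 0, t ^ n t = -(c / a) := by
  have ha' : a ∈ univ.erase (0 : F) := mem_erase.mpr ⟨ha, mem_univ _⟩
  have hc' : c ∈ (univ.erase (0 : F)).erase a :=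
    mem_erase.mpr ⟨hac.symm, mem_erase.mpr ⟨hc, mem_univ _⟩⟩
  have hrest : ∏ t ∈ ((univ.erase (0 : F)).erase a).erase c, t ^ n t =
      ∏ t ∈ ((univ.erase (0 : F)).erase a).erase c, t := by
    refine prod_congr rfl fun t ht => ?_
    obtain ⟨htc, hta, ht0⟩ : t ≠ c ∧ t ≠ a ∧ t ≠ 0 := by simpa using ht
    rw [hn t ht0 hta htc, pow_one]
  have hwilson := FiniteField.prod_erase_zero_eq_neg_one (F := F)
  rw [← mul_prod_erase _ _ ha', ← mul_prod_erase _ _ hc'] at hwilson ⊢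
  rw [hrest, hna, hnc]
  field_simp
  linear_combination hwilson

end FiniteField

section Pencil

variable {F : Type} [Field F] (b : Basis (Fin 3) F (Fin 3 → F))

/-- The line through `b 0` and `b 1 + t • b 2`. -/
noncomputable def pencilLine (t : F) : Submodule F (Fin 3 → F) :=
  LinearMap.ker (b.coord 2 - t • b.coord 1)

theorem mem_pencilLine {t : F} {v : Fin 3 → F} :
    v ∈ pencilLine b t ↔ b.coord 2 v = t * b.coord 1 v := by
  simp [pencilLine, sub_eq_zero]

theorem isLine_pencilLine (t : F) : IsLine F (pencilLine b t) := by
  refine isLine_ker fun h => ?_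
  simpa using LinearMap.congr_fun h (b 2)

theorem pencilLine_injective : Function.Injective (pencilLine b) := by
  intro t t' h
  have : b 1 + t • b 2 ∈ pencilLine b t' := h ▸ (mem_pencilLine b).mpr (by simp)
  simpa using (mem_pencilLine b).mp this

theorem ker_eq_pencilLine {φ : (Fin 3 → F) →ₗ[F] F} (h0 : φ (b 0) = 0) (h2 : φ (b 2) ≠ 0) :
    LinearMap.ker φ = pencilLine b (-(φ (b 1) / φ (b 2))) := by
  have hφ : φ = φ (b 2) • (b.coord 2 - (-(φ (b 1) / φ (b 2))) • b.coord 1) := by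
    refine b.ext fun i => ?_
    fin_cases i <;> simp [h0]
    field_simp
  conv_lhs => rw [hφ]
  exact LinearMap.ker_smul _ _ h2

theorem IsLine.eq_ker_coord_or_eq_pencilLine {W : Submodule F (Fin 3 → F)} (hW : IsLine F W)
    (h0 : b 0 ∈ W) : W = LinearMap.ker (b.coord 1) ∨ ∃ t, W = pencilLine b t := by
  obtain ⟨φ, hφ, rfl⟩ := hW.exists_ker_eq
  rw [LinearMap.mem_ker] at h0
  by_cases h2 : φ (b 2) = 0
  · have hφ1 : φ = φ (b 1) • b.coord 1 := by
      refine b.ext fun i => ?_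
      fin_cases i <;> simp [h0, h2]
    have h1 : φ (b 1) ≠ 0 := fun h => hφ (by rw [hφ1, h, zero_smul])
    left
    conv_lhs => rw [hφ1]
    exact LinearMap.ker_smul _ _ h1
  · exact Or.inr ⟨_, ker_eq_pencilLine b h0 h2⟩

theorem ncard_setOf_isLine_le [Fintype F] :
    {W | IsLine F W ∧ b 0 ∈ W}.ncard ≤ Fintype.card F + 1 := by
  have hsub : {W | IsLine F W ∧ b 0 ∈ W} ⊆
      insert (LinearMap.ker (b.coord 1)) (Set.range (pencilLine b)) := by
    rintro W ⟨hW, h0⟩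
    rcases hW.eq_ker_coord_or_eq_pencilLine b h0 with h | ⟨t, rfl⟩
    · exact Or.inl h
    · exact Or.inr ⟨t, rfl⟩
  calc _ ≤ (insert (LinearMap.ker (b.coord 1)) (Set.range (pencilLine b))).ncard :=
        Set.ncard_le_ncard hsub (Set.toFinite _)
    _ ≤ (Set.range (pencilLine b)).ncard + 1 := Set.ncard_insert_le _ _
    _ = Fintype.card F + 1 := by
      rw [← Set.image_univ, Set.ncard_image_of_injective _ (pencilLine_injective b),
        Set.ncard_univ, Nat.card_eq_fintype_card]

end Pencil

section Secants

variable {F : Type} [Field F] {S : Set (Pt F)}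

theorem eq_or_eq_of_secantCount_eq_two {W : Submodule F (Fin 3 → F)}
    (hW : secantCount F S W = 2) {p q r : Pt F} (hp : p ∈ S) (hq : q ∈ S) (hpq : p ≠ q)
    (hpW : p.submodule ≤ W) (hqW : q.submodule ≤ W) (hr : r ∈ S) (hrW : r.submodule ≤ W) :
    r = p ∨ r = q := by
  obtain ⟨u, v, -, huv⟩ := Set.ncard_eq_two.mp hW
  have hmem : ∀ s ∈ S, s.submodule ≤ W → s = u ∨ s = v := fun s hs hsW => by
    simpa [huv] using (show s ∈ {s ∈ S | s.submodule ≤ W} from ⟨hs, hsW⟩)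
  rcases hmem p hp hpW with rfl | rfl <;> rcases hmem q hq hqW with rfl | rfl <;>
    rcases hmem r hr hrW with rfl | rfl <;> simp_all

theorem rep_notMem_sup_of_secantCount_eq_two {u v p : Pt F}
    (h : secantCount F S (u.submodule ⊔ v.submodule) = 2) (hu : u ∈ S) (hv : v ∈ S)
    (huv : u ≠ v) (hp : p ∈ S) (hpu : p ≠ u) (hpv : p ≠ v) :
    p.rep ∉ u.submodule ⊔ v.submodule := fun hmem => by
  rcases eq_or_eq_of_secantCount_eq_two h hu hv huv le_sup_left le_sup_right hp
    ((p.submodule_le_iff_rep_mem _).mpr hmem) with rfl | rfl <;> contradiction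

def IsSecantFormAt (S : Set (Pt F)) (x : Pt F) (n : ℕ) (φ : (Fin 3 → F) →ₗ[F] F) : Prop :=
  φ ≠ 0 ∧ x.submodule ≤ LinearMap.ker φ ∧ secantCount F S (LinearMap.ker φ) = n

variable {x : Pt F} {n : ℕ} {φ : (Fin 3 → F) →ₗ[F] F}

theorem IsSecantFormAt.apply_ne_zero (hφ : IsSecantFormAt S x n φ) {y : Pt F} (hxy : x ≠ y)
    (hn : secantCount F S (x.submodule ⊔ y.submodule) ≠ n) : φ y.rep ≠ 0 := fun h0 => by
  have hy : y.submodule ≤ LinearMap.ker φ := (y.submodule_le_iff_rep_mem _).mpr h0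
  apply hn
  rw [(isLine_sup hxy).eq_of_le (isLine_ker hφ.1) (sup_le hφ.2.1 hy)]
  exact hφ.2.2

theorem IsSecantFormAt.eq_ker (hφ : IsSecantFormAt S x n φ)
    (hx : linesThroughWithCount F S x n = 1) {W : Submodule F (Fin 3 → F)} (hW : IsLine F W)
    (hxW : x.submodule ≤ W) (hWn : secantCount F S W = n) : W = LinearMap.ker φ := by
  obtain ⟨W₀, hW₀⟩ := Set.ncard_eq_one.mp hx
  have hmem : ∀ W', IsLine F W' → x.submodule ≤ W' → secantCount F S W' = n → W' = W₀ := by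
    intro W' h1 h2 h3
    have h : W' ∈ {W | IsLine F W ∧ x.submodule ≤ W ∧ secantCount F S W = n} := ⟨h1, h2, h3⟩
    rwa [hW₀] at h
  rw [hmem W hW hxW hWn, hmem _ (isLine_ker hφ.1) hφ.2.1 hφ.2.2]

theorem secantCount_eq_two_of_mem_S43 [Fintype F] (hx : x ∈ S43 F S)
    (b : Basis (Fin 3) F (Fin 3 → F)) (hb : b 0 = x.rep) {W : Submodule F (Fin 3 → F)}
    (hW : IsLine F W) (hxW : x.submodule ≤ W) (h1 : secantCount F S W ≠ 1)
    (h3 : secantCount F S W ≠ 3) : secantCount F S W = 2 := by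
  obtain ⟨-, hc1, hc3, hc2⟩ := hx
  let T : ℕ → Set (Submodule F (Fin 3 → F)) :=
    fun i => {W | IsLine F W ∧ x.submodule ≤ W ∧ secantCount F S W = i}
  have hdisj : ∀ {i j}, i ≠ j → Disjoint (T i) (T j) := fun hij =>
    Set.disjoint_left.mpr fun _ hi hj => hij (hi.2.2.symm.trans hj.2.2)
  have hT : T 1 ∪ T 3 ∪ T 2 = {W | IsLine F W ∧ b 0 ∈ W} := by
    refine Set.eq_of_subset_of_ncard_le ?_ ?_ (Set.toFinite _)
    · rintro W ((h | h) | h) <;> exact ⟨h.1, hb ▸ (x.submodule_le_iff_rep_mem W).mp h.2.1⟩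
    · rw [Set.ncard_union_eq (Set.disjoint_union_left.mpr ⟨hdisj (by decide), hdisj (by decide)⟩),
        Set.ncard_union_eq (hdisj (by decide))]
      change _ ≤ linesThroughWithCount F S x 1 + linesThroughWithCount F S x 3 +
        linesThroughWithCount F S x 2
      have := ncard_setOf_isLine_le b
      have := Fintype.card_pos (α := F)
      omega
  have hWT : W ∈ T 1 ∪ T 3 ∪ T 2 := hT ▸ ⟨hW, hb ▸ (x.submodule_le_iff_rep_mem W).mp hxW⟩
  rcases hWT with (h | h) | h
  exacts [absurd h.2.2 h1, absurd h.2.2 h3, h.2.2]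

end Secants

section Frames

variable {F : Type} [Field F] {S : Set (Pt F)}

theorem exists_basis_of_secantCount_eq_two {x y e : Pt F}
    (hye : secantCount F S (y.submodule ⊔ e.submodule) = 2) (hx : x ∈ S) (hy : y ∈ S)
    (he : e ∈ S) (hxy : x ≠ y) (hxe : x ≠ e) (hye' : y ≠ e) :
    ∃ b : Basis (Fin 3) F (Fin 3 → F), b 0 = x.rep ∧ b 1 = y.rep ∧ b 2 = e.rep := by
  have hind : LinearIndependent F ![x.rep, y.rep, e.rep] := by
    refine linearIndependent_finCons.mpr ⟨linearIndependent_pair_iff_ne.mpr hye', ?_⟩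
    rw [Matrix.range_cons, Matrix.range_cons_empty, Set.singleton_union,
      ← Projectivization.submodule_sup_eq_span_pair]
    exact rep_notMem_sup_of_secantCount_eq_two hye hy he hye' hx hxy hxe
  refine ⟨basisOfLinearIndependentOfCardEqFinrank hind (by simp), ?_⟩
  simp [coe_basisOfLinearIndependentOfCardEqFinrank]

theorem coord_rep_ne_zero {b : Basis (Fin 3) F (Fin 3 → F)} {u v p : Pt F} {i j k : Fin 3}
    (hij : i ≠ j) (hik : i ≠ k) (hjk : j ≠ k) (hj : b j = u.rep) (hk : b k = v.rep)
    (huv : secantCount F S (u.submodule ⊔ v.submodule) = 2) (hu : u ∈ S) (hv : v ∈ S)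
    (hp : p ∈ S) (hpu : p ≠ u) (hpv : p ≠ v) : b.coord i p.rep ≠ 0 := by
  refine b.coord_ne_zero_of_notMem (fun l hl => ?_) (rep_notMem_sup_of_secantCount_eq_two huv hu hv
    (Projectivization.ne_of_basis_apply_eq_rep hjk hj hk) hp hpu hpv)
  obtain rfl | rfl : l = j ∨ l = k := by omega
  · exact hj ▸ Submodule.mem_sup_left u.rep_mem_submodule
  · exact hk ▸ Submodule.mem_sup_right v.rep_mem_submodule

theorem prod_coord_div_coord_eq_mul {b : Basis (Fin 3) F (Fin 3 → F)} {x y e : Pt F}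
    (hb1 : b 1 = y.rep) (hb2 : b 2 = e.rep) (hye : secantCount F S (y.submodule ⊔ e.submodule) = 2)
    (hy : y ∈ S) (he : e ∈ S) {P : Finset (Pt F)} (hP : (P : Set (Pt F)) = S \ {x, y, e}) :
    ∏ p ∈ P, b.coord 2 p.rep / b.coord 1 p.rep =
      (∏ p ∈ P, b.coord 2 p.rep / b.coord 0 p.rep) *
        ∏ p ∈ P, b.coord 0 p.rep / b.coord 1 p.rep := by
  refine prod_div_eq_prod_div_mul_prod_div fun p hp => ?_
  obtain ⟨hpS, -, hpy, hpe⟩ : p ∈ S ∧ p ≠ x ∧ p ≠ y ∧ p ≠ e := by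
    simpa [← Finset.mem_coe, hP] using hp
  exact coord_rep_ne_zero (by decide) (by decide) (by decide) hb1 hb2 hye hy he hpS hpy hpe

end Frames

section Slopes

variable {F : Type} [Field F] {S : Set (Pt F)} {x y e : Pt F}
  {b : Basis (Fin 3) F (Fin 3 → F)}

theorem IsSecantFormAt.ker_eq_pencilLine {n : ℕ} {φ : (Fin 3 → F) →ₗ[F] F}
    (hφ : IsSecantFormAt S x n φ) (hb0 : b 0 = x.rep) (hb1 : b 1 = y.rep) (hb2 : b 2 = e.rep)
    (he : φ e.rep ≠ 0) : LinearMap.ker φ = pencilLine b (-(φ y.rep / φ e.rep)) := by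
  have h0 : φ (b 0) = 0 := hb0 ▸ hφ.2.1 (Projectivization.rep_mem_submodule x)
  rw [← hb2] at he
  rw [← hb1, ← hb2]
  exact _root_.ker_eq_pencilLine b h0 he

open Classical in
theorem secantCount_pencilLine (hb0 : b 0 = x.rep) (hb1 : b 1 = y.rep) (hb2 : b 2 = e.rep)
    (hx : x ∈ S) {P : Finset (Pt F)} (hP : (P : Set (Pt F)) = S \ {x, y, e}) {t : F}
    (ht : t ≠ 0) : secantCount F S (pencilLine b t) = #{p ∈ P | p.rep ∈ pencilLine b t} + 1 := by
  have hxL : x.rep ∈ pencilLine b t := by simp [← hb0, mem_pencilLine]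
  have hyL : y.rep ∉ pencilLine b t := by simpa [← hb1, mem_pencilLine] using ht.symm
  have heL : e.rep ∉ pencilLine b t := by simp [← hb2, mem_pencilLine]
  have hset : {p ∈ S | p.submodule ≤ pencilLine b t} =
      insert x ↑{p ∈ P | p.rep ∈ pencilLine b t} := by
    ext p
    simp only [Set.mem_ofPred_eq, Set.mem_insert_iff, coe_filter, ← Finset.mem_coe, hP,
      p.submodule_le_iff_rep_mem]
    by_cases hpx : p = x
    · simp [hpx, hx, hxL]
    by_cases hpy : p = y
    · subst hpy
      simp [hpx, hyL]
    by_cases hpe : p = e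
    · subst hpe
      simp [hpx, hpy, heL]
    simp [hpx, hpy, hpe]
  have hxP : x ∉ (↑{p ∈ P | p.rep ∈ pencilLine b t} : Set (Pt F)) := by simp [← Finset.mem_coe, hP]
  rw [secantCount, hset, Set.ncard_insert_of_notMem hxP, Set.ncard_coe_finset]

open Classical in
theorem prod_coord_div_coord_eq_prod_pow [Fintype F] (hb0 : b 0 = x.rep) (hb1 : b 1 = y.rep)
    (hb2 : b 2 = e.rep) (hx : x ∈ S) (hy : y ∈ S) (he : e ∈ S)
    (hxy : secantCount F S (x.submodule ⊔ y.submodule) = 2)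
    (hxe : secantCount F S (x.submodule ⊔ e.submodule) = 2)
    {P : Finset (Pt F)} (hP : (P : Set (Pt F)) = S \ {x, y, e}) :
    ∏ p ∈ P, b.coord 2 p.rep / b.coord 1 p.rep =
      ∏ t ∈ univ.erase 0, t ^ #{p ∈ P | p.rep ∈ pencilLine b t} := by
  have hc : ∀ p ∈ P, b.coord 1 p.rep ≠ 0 ∧ b.coord 2 p.rep ≠ 0 := by
    intro p hp
    obtain ⟨hpS, hpx, hpy, hpe⟩ : p ∈ S ∧ p ≠ x ∧ p ≠ y ∧ p ≠ e := by
      simpa [← Finset.mem_coe, hP] using hp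
    exact ⟨coord_rep_ne_zero (by decide) (by decide) (by decide) hb0 hb2 hxe hx he hpS hpx hpe,
      coord_rep_ne_zero (by decide) (by decide) (by decide) hb0 hb1 hxy hx hy hpS hpx hpy⟩
  rw [prod_eq_prod_pow_card_filter (t := univ.erase 0)
    fun p hp => mem_erase.mpr ⟨div_ne_zero (hc p hp).2 (hc p hp).1, mem_univ _⟩]
  refine prod_congr rfl fun t _ => congrArg _ (congrArg card (filter_congr fun p hp => ?_))
  rw [mem_pencilLine, div_eq_iff (hc p hp).1]

theorem secantCount_pencilLine_eq_two [Fintype F] {φ ψ : (Fin 3 → F) →ₗ[F] F} {τφ τψ t : F}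
    (hx : x ∈ S43 F S) (hb0 : b 0 = x.rep) (hφ : IsSecantFormAt S x 1 φ)
    (hψ : IsSecantFormAt S x 3 ψ) (hkerφ : LinearMap.ker φ = pencilLine b τφ)
    (hkerψ : LinearMap.ker ψ = pencilLine b τψ) (hτφ : t ≠ τφ) (hτψ : t ≠ τψ) :
    secantCount F S (pencilLine b t) = 2 := by
  have hxL : x.submodule ≤ pencilLine b t := by
    simp [x.submodule_le_iff_rep_mem, ← hb0, mem_pencilLine]
  refine secantCount_eq_two_of_mem_S43 hx b hb0 (isLine_pencilLine b t) hxL (fun h => ?_)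
    (fun h => ?_)
  · exact hτφ (pencilLine_injective b (hkerφ ▸ hφ.eq_ker hx.2.1 (isLine_pencilLine b t) hxL h))
  · exact hτψ (pencilLine_injective b (hkerψ ▸ hψ.eq_ker hx.2.2.1 (isLine_pencilLine b t) hxL h))

theorem prod_coord_div_coord_eq [Fintype F] {φ ψ : (Fin 3 → F) →ₗ[F] F} (hx : x ∈ S43 F S)
    (hy : y ∈ S) (he : e ∈ S) (hxy : secantCount F S (x.submodule ⊔ y.submodule) = 2)
    (hxe : secantCount F S (x.submodule ⊔ e.submodule) = 2)
    (hφ : IsSecantFormAt S x 1 φ) (hψ : IsSecantFormAt S x 3 ψ)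
    (hb0 : b 0 = x.rep) (hb1 : b 1 = y.rep) (hb2 : b 2 = e.rep)
    {P : Finset (Pt F)} (hP : (P : Set (Pt F)) = S \ {x, y, e}) :
    ∏ p ∈ P, b.coord 2 p.rep / b.coord 1 p.rep = -(ψ y.rep * φ e.rep / (ψ e.rep * φ y.rep)) := by
  classical
  have hxy' := Projectivization.ne_of_basis_apply_eq_rep (by decide) hb0 hb1
  have hxe' := Projectivization.ne_of_basis_apply_eq_rep (by decide) hb0 hb2
  have hφy := hφ.apply_ne_zero hxy' (by rw [hxy]; decide)
  have hφe := hφ.apply_ne_zero hxe' (by rw [hxe]; decide)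
  have hψy := hψ.apply_ne_zero hxy' (by rw [hxy]; decide)
  have hψe := hψ.apply_ne_zero hxe' (by rw [hxe]; decide)
  have hkerφ := hφ.ker_eq_pencilLine hb0 hb1 hb2 hφe
  have hkerψ := hψ.ker_eq_pencilLine hb0 hb1 hb2 hψe
  have hτ : -(φ y.rep / φ e.rep) ≠ -(ψ y.rep / ψ e.rep) := fun h => by
    have := hψ.2.2
    rw [hkerψ, ← h, ← hkerφ, hφ.2.2] at this
    exact absurd this (by decide)
  have hcount : ∀ t ≠ 0,
      #{p ∈ P | p.rep ∈ pencilLine b t} = secantCount F S (pencilLine b t) - 1 :=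
    fun t ht => by rw [secantCount_pencilLine hb0 hb1 hb2 hx.1 hP ht, Nat.add_sub_cancel]
  have hτφ : -(φ y.rep / φ e.rep) ≠ 0 := neg_ne_zero.mpr (div_ne_zero hφy hφe)
  have hτψ : -(ψ y.rep / ψ e.rep) ≠ 0 := neg_ne_zero.mpr (div_ne_zero hψy hψe)
  rw [prod_coord_div_coord_eq_prod_pow hb0 hb1 hb2 hx.1 hy he hxy hxe hP,
    FiniteField.prod_erase_zero_pow_eq_neg_div hτφ hτψ hτ
      (by rw [hcount _ hτφ, ← hkerφ, hφ.2.2]) (by rw [hcount _ hτψ, ← hkerψ, hψ.2.2])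
      fun t ht h1 h3 => by
        rw [hcount t ht, secantCount_pencilLine_eq_two hx hb0 hφ hψ hkerφ hkerψ h1 h3]]
  field_simp

end Slopes

section Configuration

variable {F : Type} [Field F] {S S' : Set (Pt F)} {f g : Pt F → ((Fin 3 → F) →ₗ[F] F)}

theorem apply_rep_ne_zero_of_mem (hf : ∀ x ∈ S', IsSecantFormAt S x 1 (f x))
    (hg : ∀ x ∈ S', IsSecantFormAt S x 3 (g x))
    (hbi : ∀ x ∈ S', ∀ y ∈ S', x ≠ y → secantCount F S (x.submodule ⊔ y.submodule) = 2)
    {u v : Pt F} (hu : u ∈ S') (hv : v ∈ S') (huv : u ≠ v) :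
    f u v.rep ≠ 0 ∧ g u v.rep ≠ 0 :=
  ⟨(hf u hu).apply_ne_zero huv (by rw [hbi u hu v hv huv]; decide),
    (hg u hu).apply_ne_zero huv (by rw [hbi u hu v hv huv]; decide)⟩

theorem prod_coord_div_coord_eq_of_mem [Fintype F] (hS' : S' ⊆ S43 F S)
    (hf : ∀ x ∈ S', IsSecantFormAt S x 1 (f x)) (hg : ∀ x ∈ S', IsSecantFormAt S x 3 (g x))
    (hbi : ∀ x ∈ S', ∀ y ∈ S', x ≠ y → secantCount F S (x.submodule ⊔ y.submodule) = 2)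
    {x y e : Pt F} (hx : x ∈ S') (hy : y ∈ S') (he : e ∈ S') (hxy : x ≠ y) (hxe : x ≠ e)
    {b : Basis (Fin 3) F (Fin 3 → F)} (hb0 : b 0 = x.rep) (hb1 : b 1 = y.rep) (hb2 : b 2 = e.rep)
    {P : Finset (Pt F)} (hP : (P : Set (Pt F)) = S \ {x, y, e}) :
    ∏ p ∈ P, b.coord 2 p.rep / b.coord 1 p.rep =
      -(g x y.rep * f x e.rep / (g x e.rep * f x y.rep)) :=
  prod_coord_div_coord_eq (hS' hx) (hS' hy).1 (hS' he).1 (hbi x hx y hy hxy) (hbi x hx e he hxe)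
    (hf x hx) (hg x hx) hb0 hb1 hb2 hP

end Configuration

theorem segre_lemma_of_tangents_general
    (F : Type) [Field F] [Fintype F]
    (S : Set (Pt F))
    (S' : Set (Pt F)) (hS' : S' ⊆ S43 F S)
    (f g : Pt F → ((Fin 3 → F) →ₗ[F] F))
    (hf : ∀ x ∈ S', f x ≠ 0 ∧ x.submodule ≤ LinearMap.ker (f x) ∧
      secantCount F S (LinearMap.ker (f x)) = 1)
    (hg : ∀ x ∈ S', g x ≠ 0 ∧ x.submodule ≤ LinearMap.ker (g x) ∧
      secantCount F S (LinearMap.ker (g x)) = 3)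
    (hbi : ∀ x ∈ S', ∀ y ∈ S', x ≠ y → secantCount F S (x.submodule ⊔ y.submodule) = 2)
    (e : Pt F) (he : e ∈ S')
    (hscale : ∀ x ∈ S', f x e.rep = f e x.rep ∧ g x e.rep = g e x.rep)
    :
    ∀ x ∈ S', ∀ y ∈ S', x ≠ y → x ≠ e → y ≠ e →
      f x y.rep * g y x.rep = -(f y x.rep * g x y.rep) := by
  intro x hx y hy hxy hxe hye
  obtain ⟨b, hb0, hb1, hb2⟩ := exists_basis_of_secantCount_eq_two (hbi y hy e he hye)
    (hS' hx).1 (hS' hy).1 (hS' he).1 hxy hxe hye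
  set P := (S \ {x, y, e}).toFinite.toFinset
  have hP : (P : Set (Pt F)) = S \ {x, y, e} := Set.Finite.coe_toFinset _
  have hxye := prod_coord_div_coord_eq_of_mem hS' hf hg hbi hx hy he hxy hxe hb0 hb1 hb2 hP
  have hyxe := prod_coord_div_coord_eq_of_mem (b := b.reindex (Equiv.swap 1 0)) hS' hf hg hbi
    hy hx he hxy.symm hye (by simpa using hb1) (by simpa using hb0)
    (by simpa [Equiv.swap_apply_of_ne_of_ne] using hb2) (by rw [hP, Set.insert_comm x y])
  have heyx := prod_coord_div_coord_eq_of_mem (b := b.reindex (Equiv.swap 2 0)) hS' hf hg hbi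
    he hy hx hye.symm hxe.symm (by simpa using hb2)
    (by simpa [Equiv.swap_apply_of_ne_of_ne] using hb1) (by simpa using hb0)
    (by rw [hP, Set.insert_comm e y, Set.pair_comm e x, Set.insert_comm y x])
  simp only [Basis.coord_reindex_swap_left, ne_eq, Fin.reduceEq, not_false_eq_true,
    Basis.coord_reindex_swap_of_ne] at hyxe heyx
  have hsplit := prod_coord_div_coord_eq_mul hb1 hb2 (hbi y hy e he hye) (hS' hy).1 (hS' he).1 hP
  rw [hxye, hyxe, heyx, (hscale x hx).1, (hscale x hx).2, (hscale y hy).1, (hscale y hy).2]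
    at hsplit
  obtain ⟨hfxy, -⟩ := apply_rep_ne_zero_of_mem hf hg hbi hx hy hxy
  obtain ⟨hfyx, -⟩ := apply_rep_ne_zero_of_mem hf hg hbi hy hx hxy.symm
  obtain ⟨hfex, hgex⟩ := apply_rep_ne_zero_of_mem hf hg hbi he hx hxe.symm
  obtain ⟨hfey, hgey⟩ := apply_rep_ne_zero_of_mem hf hg hbi he hy hye.symm
  field_simp at hsplit
  linear_combination -hsplit

/-- Segre-type lemma of tangents: `f_x(y) g_y(x) = - f_y(x) g_x(y)` for `x, y ∈ S`. -/
theorem segre_lemma_of_tangents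
    (F : Type) [Field F] [Fintype F] (hq : Odd (Fintype.card F))
    (S : Set (Pt F)) (hS : S.ncard = Fintype.card F + 2)
    (S' : Set (Pt F)) (hS' : S' ⊆ S43 F S)
    (f g : Pt F → ((Fin 3 → F) →ₗ[F] F))
    (hf : ∀ x ∈ S', f x ≠ 0 ∧ x.submodule ≤ LinearMap.ker (f x) ∧
      secantCount F S (LinearMap.ker (f x)) = 1)
    (hg : ∀ x ∈ S', g x ≠ 0 ∧ x.submodule ≤ LinearMap.ker (g x) ∧
      secantCount F S (LinearMap.ker (g x)) = 3)
    (hbi : ∀ x ∈ S', ∀ y ∈ S', x ≠ y → secantCount F S (x.submodule ⊔ y.submodule) = 2)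
    (e : Pt F) (he : e ∈ S')
    (hscale : ∀ x ∈ S', f x e.rep = f e x.rep ∧ g x e.rep = g e x.rep)
    :
    ∀ x ∈ S', ∀ y ∈ S', x ≠ y → x ≠ e → y ≠ e →
      f x y.rep * g y x.rep = -(f y x.rep * g x y.rep) :=
  segre_lemma_of_tangents_general F S S' hS' f g hf hg hbi e he hscale
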